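/- Large-N index theorem for D3-brane quivers: Let I range over a finite index set, let d_I, 𝔫_I, Δ_I and C be real numbers, and assume the linear constraint π·C + Σ_I d_I(Δ_I − π) = 0 (vanishing of TrR at leading order). Define W(Δ) := Σ_I d_I F(Δ_I). Then −(3/π)·W(Δ) − Σ_I d_I(𝔫_I − Δ_I/π)·F′(Δ_I) = −[ (π²/3)·C + Σ_I d_I(𝔫_I − 1)·F′(Δ_I) ]; that is, the index-theorem combination of the twisted superpotential and its derivatives reproduces the high-temperature twisted index. -/
import Mathlib


open Real

/-- `F(u) = u³/6 − π u²/2 + π² u/3`, the paper's function `F = g₊`. -/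
noncomputable def F (u : ℝ) : ℝ := u ^ 3 / 6 - π * u ^ 2 / 2 + π ^ 2 * u / 3

/-- `F′(u) = u²/2 − π u + π²/3`, the derivative of `F`. -/
noncomputable def Fprime (u : ℝ) : ℝ := u ^ 2 / 2 - π * u + π ^ 2 / 3

/-- Large-N index theorem for D3-brane quivers: assuming the linear constraint
`π·C + Σ_I d_I(Δ_I − π) = 0`, the index-theorem combination of the twisted
superpotential `W(Δ) = Σ_I d_I F(Δ_I)` and its derivatives reproduces the
high-temperature twisted index. -/
theorem stmt2 {ι : Type*} [Fintype ι] (d n Δ : ι → ℝ) (C : ℝ)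
    (hconstraint : π * C + ∑ i, d i * (Δ i - π) = 0)
    (W : ℝ) (hW : W = ∑ i, d i * F (Δ i)) :
    -(3 / π) * W - ∑ i, d i * (n i - Δ i / π) * Fprime (Δ i)
      = -((π ^ 2 / 3) * C + ∑ i, d i * (n i - 1) * Fprime (Δ i)) := by
  have hπ : (π : ℝ) ≠ 0 := pi_ne_zero
  have key : ∀ i, -(3 / π) * (d i * F (Δ i))
      - d i * (n i - Δ i / π) * Fprime (Δ i)
      + d i * (n i - 1) * Fprime (Δ i)
      = (π / 3) * (d i * (Δ i - π)) := by
    intro i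
    simp only [F, Fprime]
    field_simp
    ring
  have hsum : ∑ i, ((-(3 / π) * (d i * F (Δ i))
      - d i * (n i - Δ i / π) * Fprime (Δ i)
      + d i * (n i - 1) * Fprime (Δ i)))
      = (π / 3) * ∑ i, d i * (Δ i - π) := by
    rw [Finset.mul_sum]
    exact Finset.sum_congr rfl fun i _ => key i
  have hc : (π / 3) * ∑ i, d i * (Δ i - π) = -((π ^ 2 / 3) * C) := by
    have : ∑ i, d i * (Δ i - π) = -(π * C) := by linarith
    rw [this]; field_simp
  rw [hW, Finset.mul_sum]
  have expand : ∑ i, -(3 / π) * (d i * F (Δ i))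
      = ∑ i, ((-(3 / π) * (d i * F (Δ i))
        - d i * (n i - Δ i / π) * Fprime (Δ i)
        + d i * (n i - 1) * Fprime (Δ i)))
      + ∑ i, d i * (n i - Δ i / π) * Fprime (Δ i)
      - ∑ i, d i * (n i - 1) * Fprime (Δ i) := by
    rw [← Finset.sum_add_distrib, ← Finset.sum_sub_distrib]
    exact Finset.sum_congr rfl fun i _ => by ring
  rw [expand, hsum, hc]
  ring
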